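/- Let p < q < r be odd primes and write Φ_{pq}(x) = Σ_m d_m x^m (with d_m = 0 for m outside [0, φ(pq)]). Then A(pqr) ≤ max over integers i and j of |Σ_{m ≥ j} d_m χ_{mr}(i)|, where the inner sum is over all m with j ≤ m ≤ φ(pq). -/

import Mathlib

/-- The map `χ_n : ℤ → {0, ±1}` from the paper (depending on `p` and `q`).
Here `x % (p*q)` plays the role of `x̄`, the representative of `x` modulo `pq`
lying in `[0, pq − 1]`. -/
def chi (p q : ℕ) (n i : ℤ) : ℤ :=
  if ((i + 1) % (p * q) ≤ (n + p + q) % (p * q) ∧ (n + q) % (p * q) < (i + 1) % (p * q)) ∨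
     ((i + 1) % (p * q) ≤ (n + p + q) % (p * q) ∧ (n + p + q) % (p * q) < (n + q) % (p * q)) ∨
     ((n + p + q) % (p * q) < (n + q) % (p * q) ∧ (n + q) % (p * q) < (i + 1) % (p * q))
  then 1
  else if ((i + 1) % (p * q) ≤ (n + p) % (p * q) ∧ n % (p * q) < (i + 1) % (p * q)) ∨
     ((i + 1) % (p * q) ≤ (n + p) % (p * q) ∧ (n + p) % (p * q) < n % (p * q)) ∨
     ((n + p) % (p * q) < n % (p * q) ∧ n % (p * q) < (i + 1) % (p * q))
  then -1
  else 0

/-- `A n` is the largest absolute value of a coefficient of the `n`-th cyclotomic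
polynomial (over `ℤ`). -/
noncomputable def cycCoeffMax (n : ℕ) : ℕ :=
  (Finset.range (Nat.totient n + 1)).sup fun i => ((Polynomial.cyclotomic n ℤ).coeff i).natAbs


/-!
Put `G = (X ^ q - 1) (1 + X + ⋯ + X ^ (p - 1))`, so that `Φ_{pq} G = X ^ (pq) - 1`; together with
`Φ_{pq}(X ^ r) = Φ_{pqr} Φ_{pq}` this gives `Φ_{pqr}(X) (X ^ (pq) - 1) = Φ_{pq}(X ^ r) G(X)`.
The value `χ_{mr}(i)` is the coefficient of `G` at the residue of `i - mr` modulo `pq`.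
Comparing coefficients of `X ^ n` shows that `D(n) = Σ_{mr > n} d_m χ_{mr}(n) - a_n`, where
`a_n` are the coefficients of `Φ_{pqr}`, satisfies `D(n + pq) = D(n)`; as `D(n) = 0` for large
`n`, it vanishes identically, so every `a_n` is one of the sums, with `i = n` and
`j = ⌊n / r⌋ + 1`.
-/

open Polynomial Finset

theorem Function.Periodic.eq_zero_of_forall_ge {M : Type*} [Zero M] {D : ℤ → M} {c : ℤ}
    (hD : Function.Periodic D c) (hc : 0 < c) {b : ℤ} (hb : ∀ n, b ≤ n → D n = 0)
    (n : ℤ) : D n = 0 := by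
  rw [← hD.nat_mul (b - n).toNat n]
  apply hb
  nlinarith [Int.self_le_toNat (b - n), Int.natCast_nonneg (b - n).toNat]

theorem Int.emod_eq_cases_of_neg_le_of_lt_two_mul {N y : ℤ} (h₁ : -N ≤ y) (h₂ : y < 2 * N) :
    (y < 0 ∧ y % N = y + N) ∨ (0 ≤ y ∧ y < N ∧ y % N = y) ∨
      (N ≤ y ∧ y % N = y - N) := by
  rcases lt_or_ge y 0 with hneg | hnonneg
  · refine Or.inl ⟨hneg, ?_⟩
    rw [← Int.add_emod_right]
    exact Int.emod_eq_of_lt (by omega) (by omega)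
  rcases lt_or_ge y N with hlt | hge
  · exact Or.inr <| Or.inl ⟨hnonneg, hlt, Int.emod_eq_of_lt hnonneg hlt⟩
  · refine Or.inr <| Or.inr ⟨hge, ?_⟩
    rw [← Int.sub_emod_right]
    exact Int.emod_eq_of_lt (by omega) (by omega)

namespace Polynomial

variable {R : Type*}

section Semiring

variable [Semiring R]

noncomputable def coeffInt (n : ℤ) : R[X] →ₗ[R] R := if 0 ≤ n then lcoeff R n.toNat else 0

@[simp]
theorem coeffInt_natCast (f : R[X]) (k : ℕ) : coeffInt k f = f.coeff k := by
  simp [coeffInt]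

theorem coeffInt_of_neg (f : R[X]) {n : ℤ} (hn : n < 0) : coeffInt n f = 0 := by
  simp [coeffInt, hn.not_ge]

theorem coeffInt_of_natDegree_lt (f : R[X]) {n : ℤ} (hn : (f.natDegree : ℤ) < n) :
    coeffInt n f = 0 := by
  rw [coeffInt, if_pos (by omega)]
  exact coeff_eq_zero_of_natDegree_lt (by omega)

theorem coeffInt_mul_X_pow (f : R[X]) (k : ℕ) (n : ℤ) :
    coeffInt n (f * X ^ k) = coeffInt (n - k) f := by
  by_cases hn : 0 ≤ n
  · simp only [coeffInt, if_pos hn, lcoeff_apply, coeff_mul_X_pow']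
    by_cases hk : k ≤ n.toNat
    · rw [if_pos hk, if_pos (by omega)]
      congr 1
      omega
    · rw [if_neg hk, if_neg (by omega), LinearMap.zero_apply]
  · rw [coeffInt_of_neg _ (by omega), coeffInt_of_neg _ (by omega)]

end Semiring

noncomputable def cyclotomicCofactor (R : Type*) [Ring R] (p q : ℕ) : R[X] :=
  (X ^ q - 1) * ∑ t ∈ range p, X ^ t

section Ring

variable [Ring R]

theorem coeff_cyclotomicCofactor (p q k : ℕ) :
    (cyclotomicCofactor R p q).coeff k =
      (if q ≤ k ∧ k < q + p then 1 else 0) - (if k < p then 1 else 0) := by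
  have hgeom : ∀ j, (∑ t ∈ range p, (X : R[X]) ^ t).coeff j = if j < p then 1 else 0 := by
    intro j
    simp [coeff_X_pow]
  rw [cyclotomicCofactor, sub_mul, one_mul, (commute_X_pow _ q).eq, coeff_sub,
    coeff_mul_X_pow', hgeom]
  by_cases hk : q ≤ k
  · simp only [hk, if_true, hgeom, true_and]
    congr 1
    exact if_congr (by omega) rfl rfl
  · simp only [hk, if_false, false_and, hgeom]

theorem coeffInt_cyclotomicCofactor (p q : ℕ) (t : ℤ) :
    coeffInt t (cyclotomicCofactor R p q) =
      (if (q : ℤ) ≤ t ∧ t < q + p then 1 else 0) - (if 0 ≤ t ∧ t < p then 1 else 0) := by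
  rcases lt_or_ge t 0 with ht | ht
  · rw [coeffInt_of_neg _ ht, if_neg (by omega), if_neg (by omega), sub_zero]
  · lift t to ℕ using ht
    rw [coeffInt_natCast, coeff_cyclotomicCofactor]
    norm_cast
    simp

theorem natDegree_cyclotomicCofactor_lt {p : ℕ} (hp : 0 < p) (q : ℕ) :
    (cyclotomicCofactor R p q).natDegree < q + p := by
  have : (cyclotomicCofactor R p q).natDegree ≤ q + p - 1 :=
    natDegree_le_iff_coeff_eq_zero.mpr fun k hk => by
      rw [coeff_cyclotomicCofactor, if_neg (by omega), if_neg (by omega), sub_zero]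
  omega

end Ring

section CommRing

variable [CommRing R]

theorem coeffInt_expand_mul (r : ℕ) (h g : R[X]) (n : ℤ) :
    coeffInt n (expand R r h * g) =
      ∑ m ∈ range (h.natDegree + 1), h.coeff m * coeffInt (n - m * r) g := by
  conv_lhs => rw [h.as_sum_range_C_mul_X_pow]
  simp only [map_sum, map_mul, map_pow, expand_C, expand_X, sum_mul, ← pow_mul]
  refine sum_congr rfl fun m _ => ?_
  rw [show C (h.coeff m) * X ^ (r * m) * g = h.coeff m • (g * X ^ (r * m)) by
    rw [smul_eq_C_mul]; ring, map_smul, coeffInt_mul_X_pow, smul_eq_mul]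
  push_cast
  ring_nf

theorem coeffInt_eq_sum_of_mul_X_pow_sub_one {f g h : R[X]} {N r : ℕ} (hg : g.natDegree < N)
    (hfgh : f * (X ^ N - 1) = expand R r h * g) (n : ℤ) :
    coeffInt n f = ∑ m ∈ (range (h.natDegree + 1)).filter (fun m : ℕ => n < m * r),
      h.coeff m * coeffInt ((n - m * r) % N) g := by
  set S : ℤ → R := fun n => ∑ m ∈ range (h.natDegree + 1),
    if n < m * r then h.coeff m * coeffInt ((n - m * r) % N) g else 0
  suffices hzero : ∀ n, S n - coeffInt n f = 0 by
    rw [sum_filter]; exact (sub_eq_zero.mp (hzero n)).symm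
  have hper : Function.Periodic (fun n => S n - coeffInt n f) N := by
    intro n
    have hf : coeffInt n f - coeffInt (n + N) f = coeffInt (n + N) (expand R r h * g) := by
      rw [← hfgh, mul_sub, mul_one, map_sub, coeffInt_mul_X_pow, add_sub_cancel_right]
    have hS : S (n + N) - S n = -coeffInt (n + N) (expand R r h * g) := by
      rw [coeffInt_expand_mul, ← sum_neg_distrib, ← sum_sub_distrib]
      refine sum_congr rfl fun m _ => ?_
      have hmod : (n - m * r) % (N : ℤ) = (n + N - m * r) % N := by
        rw [add_sub_right_comm, Int.add_emod_right]
      rw [hmod]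
      split_ifs with h₁ h₂ h₂
      · rw [coeffInt_of_neg g (show n + N - m * r < 0 by omega)]; ring
      · omega
      · rw [Int.emod_eq_of_lt (by omega) (by omega)]; ring
      · rw [coeffInt_of_natDegree_lt g (show (g.natDegree : ℤ) < n + N - m * r by omega)]
        ring
    simp only
    linear_combination hS + hf
  refine hper.eq_zero_of_forall_ge (by omega) (b := h.natDegree * r + f.natDegree + 1)
    fun n hn => ?_
  have hSn : S n = 0 := sum_eq_zero fun m hm => if_neg <| by
    have : (m : ℤ) * r ≤ h.natDegree * r := by
      have := mem_range.mp hm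
      gcongr; omega
    omega
  have hdeg : (f.natDegree : ℤ) < n := by
    have : (0 : ℤ) ≤ h.natDegree * r := by positivity
    omega
  simp only [hSn, coeffInt_of_natDegree_lt f hdeg, sub_zero]

theorem cyclotomic_mul_cyclotomicCofactor {p q : ℕ} (hp : p.Prime) (hq : q.Prime)
    (hpq : p ≠ q) : cyclotomic (p * q) R * cyclotomicCofactor R p q = X ^ (p * q) - 1 := by
  have : Fact p.Prime := ⟨hp⟩
  have hqp : ¬q ∣ p := fun h => hpq ((Nat.prime_dvd_prime_iff_eq hq hp).mp h).symm
  calc cyclotomic (p * q) R * cyclotomicCofactor R p q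
      = cyclotomic (p * q) R * cyclotomic p R * (X ^ q - 1) := by
        rw [cyclotomicCofactor, cyclotomic_prime R p]; ring
    _ = (∑ t ∈ range p, (X ^ q) ^ t) * (X ^ q - 1) := by
        rw [← cyclotomic_expand_eq_cyclotomic_mul hq hqp, cyclotomic_prime R p, map_sum]
        simp only [map_pow, expand_X]
    _ = X ^ (p * q) - 1 := by rw [geom_sum_mul, ← pow_mul, mul_comm]

theorem cyclotomic_mul_X_pow_sub_one {p q r : ℕ} (hp : p.Prime) (hq : q.Prime)
    (hr : r.Prime) (hpq : p ≠ q) (hrp : r ≠ p) (hrq : r ≠ q) :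
    cyclotomic (p * q * r) R * (X ^ (p * q) - 1) =
      expand R r (cyclotomic (p * q) R) * cyclotomicCofactor R p q := by
  have hr_dvd : ¬r ∣ p * q := by
    rw [hr.dvd_mul, Nat.prime_dvd_prime_iff_eq hr hp, Nat.prime_dvd_prime_iff_eq hr hq]
    tauto
  rw [cyclotomic_expand_eq_cyclotomic_mul hr hr_dvd, mul_assoc (cyclotomic _ R),
    cyclotomic_mul_cyclotomicCofactor hp hq hpq]

end CommRing

end Polynomial

theorem chi_eq_coeffInt_cyclotomicCofactor {p q : ℕ} (hp : 2 ≤ p) (hpq : p < q) (n i : ℤ) :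
    chi p q n i = coeffInt ((i - n) % (p * q : ℕ)) (cyclotomicCofactor ℤ p q) := by
  have hN : (q : ℤ) + p ≤ p * q := by
    have : (2 : ℤ) ≤ p := by exact_mod_cast hp
    have : (p : ℤ) < q := by exact_mod_cast hpq
    nlinarith
  rw [coeffInt_cyclotomicCofactor, chi]
  push_cast
  generalize (p : ℤ) * q = N at *
  have h₁ : (n + p + q) % N = (n % N + (p + q)) % N := by rw [Int.emod_add_emod, add_assoc]
  have h₂ : (n + q) % N = (n % N + q) % N := (Int.emod_add_emod n N q).symm
  have h₃ : (n + p) % N = (n % N + p) % N := (Int.emod_add_emod n N p).symm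
  have h₄ : (i - n) % N = ((i + 1) % N - 1 - n % N) % N := by
    rw [show i - n = i + 1 - 1 - n by ring]
    exact (((Int.mod_modEq (i + 1) N).sub_right 1).sub (Int.mod_modEq n N)).symm
  rw [h₁, h₂, h₃, h₄]
  -- every residue is now that of a number in `[-N, 2N)` built from `n % N` and `(i + 1) % N`
  have ha := Int.emod_nonneg n (show N ≠ 0 by omega)
  have ha' := Int.emod_lt_of_pos n (show 0 < N by omega)
  have hx := Int.emod_nonneg (i + 1) (show N ≠ 0 by omega)
  have hx' := Int.emod_lt_of_pos (i + 1) (show 0 < N by omega)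
  generalize n % N = a at *
  generalize (i + 1) % N = x at *
  have c₁ := Int.emod_eq_cases_of_neg_le_of_lt_two_mul (y := a + (p + q)) (N := N)
    (by omega) (by omega)
  have c₂ := Int.emod_eq_cases_of_neg_le_of_lt_two_mul (y := a + q) (N := N) (by omega) (by omega)
  have c₃ := Int.emod_eq_cases_of_neg_le_of_lt_two_mul (y := a + p) (N := N) (by omega) (by omega)
  have c₄ := Int.emod_eq_cases_of_neg_le_of_lt_two_mul (y := x - 1 - a) (N := N)
    (by omega) (by omega)
  split_ifs <;> omega

theorem A_le_max_sum_chi_general (p q r : ℕ) (hp : p.Prime) (hq : q.Prime) (hr : r.Prime)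
    (hpq : p < q) (hqr : q < r) :
    ∃ i j : ℤ, (cycCoeffMax (p * q * r) : ℤ) ≤
      |∑ m ∈ (Finset.range (Nat.totient (p * q) + 1)).filter (fun m : ℕ => j ≤ (m : ℤ)),
        (Polynomial.cyclotomic (p * q) ℤ).coeff m * chi p q ((m : ℤ) * r) i| := by
  obtain ⟨n, -, hn⟩ := exists_mem_eq_sup (range ((p * q * r).totient + 1))
    nonempty_range_add_one fun i => ((cyclotomic (p * q * r) ℤ).coeff i).natAbs
  refine ⟨n, n / r + 1, le_of_eq ?_⟩
  have hid := cyclotomic_mul_X_pow_sub_one (R := ℤ) hp hq hr hpq.ne (by omega) (by omega)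
  have hdeg : (cyclotomicCofactor ℤ p q).natDegree < p * q :=
    (natDegree_cyclotomicCofactor_lt hp.pos q).trans_le (by nlinarith [hp.two_le])
  have hcoeff := coeffInt_eq_sum_of_mul_X_pow_sub_one hdeg hid n
  rw [natDegree_cyclotomic, coeffInt_natCast] at hcoeff
  rw [cycCoeffMax, hn, Int.natCast_natAbs, hcoeff]
  congr 1
  refine sum_congr (filter_congr fun m _ => ?_) fun m _ => ?_
  · rw [Int.add_one_le_iff, Int.ediv_lt_iff_lt_mul (by exact_mod_cast hr.pos)]
  · rw [chi_eq_coeffInt_cyclotomicCofactor hp.two_le hpq]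

/-- For odd primes `p < q < r`, `A(pqr)` is at most the maximum over integers `i, j`
of `|Σ_{j ≤ m ≤ φ(pq)} d_m χ_{mr}(i)|` (stated as: this maximum is attained, i.e.
some pair `i, j` gives a value at least `A(pqr)`). -/
theorem A_le_max_sum_chi (p q r : ℕ) (hp : p.Prime) (hq : q.Prime) (hr : r.Prime)
    (hop : Odd p) (hoq : Odd q) (hor : Odd r) (hpq : p < q) (hqr : q < r) :
    ∃ i j : ℤ, (cycCoeffMax (p * q * r) : ℤ) ≤
      |∑ m ∈ (Finset.range (Nat.totient (p * q) + 1)).filter (fun m : ℕ => j ≤ (m : ℤ)),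
        (Polynomial.cyclotomic (p * q) ℤ).coeff m * chi p q ((m : ℤ) * r) i| :=
  A_le_max_sum_chi_general p q r hp hq hr hpq hqr
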